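/- For every integer Δ ≥ 3 and every configuration C in the white constraint 𝒩 of the problem Π_{Δ−2,Δ}, there exists a label L occurring in C such that the size-3 multiset {L, L, L} does not belong to the black constraint ℰ of Π_{Δ−2,Δ}. (This is the combinatorial content of the fact that Π_{Δ−2,Δ} is not 0-round solvable in the deterministic port-numbering model, even given a Δ-edge coloring.) -/
import Mathlib


/-- A two-bit label: the first component is the input bit, the second the output bit. -/
abbrev TwoBit := Bool × Bool

def b00 : TwoBit := (false, false)
def b01 : TwoBit := (false, true)
def b10 : TwoBit := (true, false)
def b11 : TwoBit := (true, true)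

/-- The 22 maximal bit triples. -/
def bitTriples : List (Fin 3 → Set TwoBit) :=
  [ ![{b00, b10, b11}, {b00}, {b00}],
    ![{b01, b10, b11}, {b00}, {b01}],
    ![{b00, b10, b11}, {b01}, {b01}],
    ![{b00, b01, b11}, {b00}, {b10}],
    ![{b00, b01, b10}, {b00}, {b11}],
    ![{b00, b01, b10}, {b01}, {b10}],
    ![{b00, b01, b11}, {b01}, {b11}],
    ![{b01, b10, b11}, {b10}, {b10}],
    ![{b00, b10, b11}, {b10}, {b11}],
    ![{b01, b10, b11}, {b11}, {b11}],
    ![{b00, b10}, {b00}, {b00, b11}],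
    ![{b01, b11}, {b00}, {b01, b10}],
    ![{b00, b10}, {b01}, {b01, b10}],
    ![{b01, b11}, {b00, b11}, {b01}],
    ![{b00, b10}, {b01, b11}, {b10}],
    ![{b11}, {b00, b10}, {b00, b10}],
    ![{b10}, {b01, b10}, {b01, b10}],
    ![{b10}, {b00, b11}, {b00, b11}],
    ![{b00, b11}, {b01, b10}, {b11}],
    ![{b11}, {b01, b11}, {b01, b11}],
    ![{b10, b11}, {b00, b01}, {b00, b01}],
    ![{b10, b11}, {b10, b11}, {b10, b11}] ]

/-- The labels of the problem Π_{Δ−2,Δ}: color-1 labels EE₁, MM₁, MY₁^y; color-2 labels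
MM₂, MY₂^y, XY₂^{x,y}; and gone-color labels Q_j, E_j (used for 3 ≤ j ≤ Δ). -/
inductive PLab where
  | EE1 : PLab
  | MM1 : PLab
  | MY1 : Bool → PLab
  | MM2 : PLab
  | MY2 : Bool → PLab
  | XY2 : Bool → Bool → PLab
  | Q : ℕ → PLab
  | E : ℕ → PLab
deriving DecidableEq

open PLab

/-- The multiset {Q₃, …, Q_Δ}. -/
def Qs (Δ : ℕ) : Multiset PLab := (Finset.Icc 3 Δ).val.map PLab.Q

/-- The white constraint 𝒩 of Π_{Δ−2,Δ}: the configurations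
(i) {MY₁^{y₁}, XY₂^{y₁,y₂}, Q₃, …, Q_Δ}; (ii) {MM₁, MY₂^y, Q₃, …, Q_Δ};
(iii) {EE₁, MM₂, Q₃, …, Q_Δ}; (iv) {MM₁, MM₂, Q₃, …, Q_Δ} with Q_a replaced by E_a,
for each 3 ≤ a ≤ Δ. -/
def whiteN (Δ : ℕ) : Set (Multiset PLab) :=
  {C | ∃ y₁ y₂ : Bool, C = MY1 y₁ ::ₘ XY2 y₁ y₂ ::ₘ Qs Δ} ∪
  {C | ∃ y : Bool, C = MM1 ::ₘ MY2 y ::ₘ Qs Δ} ∪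
  {C | C = EE1 ::ₘ MM2 ::ₘ Qs Δ} ∪
  {C | ∃ a : ℕ, 3 ≤ a ∧ a ≤ Δ ∧
    C = MM1 ::ₘ MM2 ::ₘ PLab.E a ::ₘ ((Finset.Icc 3 Δ).erase a).val.map PLab.Q}

/-- The set of size-3 multisets represented by a condensed configuration. -/
def picks (D : Fin 3 → Set PLab) : Set (Multiset PLab) :=
  {C | ∃ l₁ ∈ D 0, ∃ l₂ ∈ D 1, ∃ l₃ ∈ D 2, C = ({l₁, l₂, l₃} : Multiset PLab)}

/-- The two condensed configurations for color 1. -/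
def cond1P : List (Fin 3 → Set PLab) :=
  [ ![{EE1, MM1, MY1 false, MY1 true}, {MM1}, {MM1, MY1 false}],
    ![{MM1, MY1 false}, {MM1, MY1 false}, {MM1, MY1 true}] ]

/-- The special-color augmentation of a set of two-bit labels (the result of the
present-color augmentation after deleting EE, XM0, XM1): replace each two-bit label `xy`
by `XY₂^{x,y}`; add `MY₂^y` if both `XY₂^{0,y}` and `XY₂^{1,y}` are present; and always
add `MM₂`. -/
def augS2 (T : Set TwoBit) : Set PLab :=
  {MM2} ∪ {l | ∃ x y, (x, y) ∈ T ∧ l = XY2 x y}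
    ∪ {l | ∃ y, (false, y) ∈ T ∧ (true, y) ∈ T ∧ l = MY2 y}

/-- The set Λ_s of special-color labels (at color 2). -/
def LamS2 : Set PLab :=
  {l | l = MM2 ∨ (∃ y, l = MY2 y) ∨ (∃ x y, l = XY2 x y)}

/-- The condensed configurations for color 2 (the special-color constraint ℰ_s, read with
subscript 2). -/
def cond2P : List (Fin 3 → Set PLab) :=
  bitTriples.map (fun T => fun j => augS2 (T j)) ++ [![{MM2}, LamS2, LamS2]]

/-- The condensed configuration for a gone color 3 ≤ j ≤ Δ. -/
def condGP (j : ℕ) : Fin 3 → Set PLab :=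
  ![{PLab.E j, PLab.Q j}, {PLab.E j, PLab.Q j}, {PLab.Q j}]

/-- The black constraint ℰ of Π_{Δ−2,Δ}: all size-3 multisets of labels of one common
color, represented by the condensed configurations of colors 1, 2, and 3 ≤ j ≤ Δ. -/
def blackE (Δ : ℕ) : Set (Multiset PLab) :=
  {C | ∃ D ∈ cond1P, C ∈ picks D} ∪
  {C | ∃ D ∈ cond2P, C ∈ picks D} ∪
  {C | ∃ j : ℕ, 3 ≤ j ∧ j ≤ Δ ∧ C ∈ picks (condGP j)}

lemma triple_eq {L a b c : PLab} (h : ({L, L, L} : Multiset PLab) = {a, b, c}) :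
    a = L ∧ b = L ∧ c = L := by
  have ha : a ∈ ({L, L, L} : Multiset PLab) := by rw [h]; simp
  have hb : b ∈ ({L, L, L} : Multiset PLab) := by rw [h]; simp
  have hc : c ∈ ({L, L, L} : Multiset PLab) := by rw [h]; simp
  simp at ha hb hc
  exact ⟨ha, hb, hc⟩

lemma triple_mem_picks (L : PLab) (D : Fin 3 → Set PLab) :
    ({L, L, L} : Multiset PLab) ∈ picks D ↔ (L ∈ D 0 ∧ L ∈ D 1 ∧ L ∈ D 2) := by
  constructor
  · rintro ⟨a, ha, b, hb, c, hc, h⟩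
    obtain ⟨ea, eb, ec⟩ := triple_eq h
    subst ea; subst eb; subst ec
    exact ⟨ha, hb, hc⟩
  · rintro ⟨h0, h1, h2⟩
    exact ⟨L, h0, L, h1, L, h2, rfl⟩

lemma my2_mem_augS2 (y : Bool) (T : Set TwoBit) :
    MY2 y ∈ augS2 T ↔ (false, y) ∈ T ∧ (true, y) ∈ T := by
  cases y <;> simp [augS2]

lemma not_black_of (Δ : ℕ) (L : PLab)
    (h1 : ∀ D ∈ cond1P, ¬(L ∈ D 0 ∧ L ∈ D 1 ∧ L ∈ D 2))
    (h2 : ∀ D ∈ cond2P, ¬(L ∈ D 0 ∧ L ∈ D 1 ∧ L ∈ D 2))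
    (h3 : ∀ j : ℕ, ¬(L ∈ condGP j 0 ∧ L ∈ condGP j 1 ∧ L ∈ condGP j 2)) :
    ({L, L, L} : Multiset PLab) ∉ blackE Δ := by
  rintro ((⟨D, hD, hp⟩ | ⟨D, hD, hp⟩) | ⟨j, _, _, hp⟩)
  · exact h1 D hD ((triple_mem_picks L D).mp hp)
  · exact h2 D hD ((triple_mem_picks L D).mp hp)
  · exact h3 j ((triple_mem_picks L (condGP j)).mp hp)

lemma not_aug_other (L : PLab) (hmm : L ≠ MM2) (hmy : ∀ y, L ≠ MY2 y)
    (hxy : ∀ x y, L ≠ XY2 x y) (D : Fin 3 → Set PLab) (hD : D ∈ cond2P) :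
    L ∉ D 0 := by
  simp only [cond2P, List.mem_append, List.mem_map, List.mem_singleton] at hD
  rcases hD with ⟨T, _, rfl⟩ | rfl
  · rintro ((h | ⟨x, y, _, rfl⟩) | ⟨y, _, _, rfl⟩)
    · exact hmm h
    · exact hxy x y rfl
    · exact hmy y rfl
  · intro h
    simp only [Matrix.cons_val_zero, Set.mem_singleton_iff] at h
    exact hmm h

/-- **Π_{Δ−2,Δ} is not 0-round solvable** (combinatorial content): for every Δ ≥ 3 and
every configuration C in the white constraint of Π_{Δ−2,Δ}, there is a label L in C whose
"monochromatic" multiset {L, L, L} is not in the black constraint of Π_{Δ−2,Δ}. -/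
theorem pi_not_zero_round_solvable (Δ : ℕ) (hΔ : 3 ≤ Δ)
    (C : Multiset PLab) (hC : C ∈ whiteN Δ) :
    ∃ L ∈ C, ({L, L, L} : Multiset PLab) ∉ blackE Δ := by
  rcases hC with (((⟨y₁, y₂, rfl⟩ | ⟨y, rfl⟩) | rfl) | ⟨a, ha3, haΔ, rfl⟩)
  · refine ⟨MY1 y₁, by simp, not_black_of Δ _ ?_ ?_ ?_⟩
    · intro D hD
      simp only [cond1P, List.mem_cons, List.not_mem_nil, or_false] at hD
      rcases hD with rfl | rfl <;> cases y₁ <;> rintro ⟨h0, h1, h2⟩ <;>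
        simp_all [Set.mem_insert_iff]
    · rintro D hD ⟨h0, _, _⟩
      exact not_aug_other _ (by simp) (by simp) (by simp) D hD h0
    · rintro j ⟨h0, _, _⟩
      simp [condGP] at h0
  · refine ⟨MY2 y, by simp, not_black_of Δ _ ?_ ?_ ?_⟩
    · intro D hD
      simp only [cond1P, List.mem_cons, List.not_mem_nil, or_false] at hD
      rcases hD with rfl | rfl <;> rintro ⟨h0, h1, h2⟩ <;> simp_all [Set.mem_insert_iff]
    · intro D hD
      simp only [cond2P, List.mem_append, List.mem_map, List.mem_singleton] at hD
      rcases hD with ⟨T, hT, rfl⟩ | rfl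
      · rintro ⟨h0, h1, h2⟩
        simp only [my2_mem_augS2] at h0 h1 h2
        fin_cases hT <;> cases y <;>
          simp_all [b00, b01, b10, b11, Set.mem_insert_iff, Prod.ext_iff]
      · rintro ⟨h0, _, _⟩
        simp at h0
    · rintro j ⟨h0, _, _⟩
      simp [condGP] at h0
  · refine ⟨EE1, by simp, not_black_of Δ _ ?_ ?_ ?_⟩
    · intro D hD
      simp only [cond1P, List.mem_cons, List.not_mem_nil, or_false] at hD
      rcases hD with rfl | rfl <;> rintro ⟨h0, h1, h2⟩ <;> simp_all [Set.mem_insert_iff]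
    · rintro D hD ⟨h0, _, _⟩
      exact not_aug_other _ (by simp) (by simp) (by simp) D hD h0
    · rintro j ⟨h0, _, _⟩
      simp [condGP] at h0
  · refine ⟨PLab.E a, by simp, not_black_of Δ _ ?_ ?_ ?_⟩
    · intro D hD
      simp only [cond1P, List.mem_cons, List.not_mem_nil, or_false] at hD
      rcases hD with rfl | rfl <;> rintro ⟨h0, h1, h2⟩ <;> simp_all [Set.mem_insert_iff]
    · rintro D hD ⟨h0, _, _⟩
      exact not_aug_other _ (by simp) (by simp) (by simp) D hD h0
    · rintro j ⟨_, _, h2⟩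
      simp [condGP] at h2
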